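/- If (sigma, tau) is a good pair of permutations of {1,...,n} with disjoint ascent sets A(sigma) ∩ A(tau) = ∅, then (w_0 sigma w_0, w_0 tau w_0) is a good pair with disjoint ascent sets as well. -/

import Mathlib

open Finset

/-- The `j`-th entry of the Lehmer code of `w`: the number of `k > j` with `w k < w j`. -/
def LC {n : ℕ} (w : Equiv.Perm (Fin n)) (j : Fin n) : ℕ :=
  (Finset.univ.filter (fun k => j < k ∧ w k < w j)).card

/-- `L'_j(w) = L_j(w⁻¹)`. -/
def LC' {n : ℕ} (w : Equiv.Perm (Fin n)) (j : Fin n) : ℕ := LC w⁻¹ j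

/-- The longest permutation `w₀` (zero-based: `i ↦ i.rev = n - 1 - i`). -/
def w0 {n : ℕ} : Equiv.Perm (Fin n) := ⟨Fin.rev, Fin.rev, Fin.rev_rev, Fin.rev_rev⟩

/-- `(σ, τ)` is a good pair: `L_j(σ) ≥ L_j(τ)` and `L'_{σ(j)}(σ) ≥ L'_{τ(j)}(τ)` for all `j`. -/
def GoodPair {n : ℕ} (σ τ : Equiv.Perm (Fin n)) : Prop :=
  ∀ j : Fin n, LC τ j ≤ LC σ j ∧ LC' τ (τ j) ≤ LC' σ (σ j)

/-- The ascent set of a permutation of `Fin (n+1)`: those `i` with `w i < w (i+1)`. -/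
def Asc {n : ℕ} (w : Equiv.Perm (Fin (n + 1))) : Finset (Fin n) :=
  Finset.univ.filter (fun i => w i.castSucc < w i.succ)

/-! Conjugation by `w₀` reverses both positions and values of a permutation. Reversing both
turns an inversion `(j, k)` of `w₀ w w₀` into an inversion of `w⁻¹` read at `w (rev j)`, so
`L_j(w₀ w w₀) = L'_{w(rev j)}(w)` and, dually, `L'(w₀ w w₀) = L(w)` at `rev j`: the conjugation
swaps the two halves of the good-pair condition. Ascents of `w₀ w w₀` are the reversed ascents
of `w`, so disjointness of ascent sets is preserved. -/

section ConjW0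

variable {n : ℕ}

lemma w0_inv : (w0 : Equiv.Perm (Fin n))⁻¹ = w0 := rfl

lemma conj_w0_apply (w : Equiv.Perm (Fin n)) (j : Fin n) :
    (w0 * w * w0 : Equiv.Perm (Fin n)) j = (w j.rev).rev := rfl

lemma conj_w0_inv (w : Equiv.Perm (Fin n)) : (w0 * w * w0)⁻¹ = w0 * w⁻¹ * w0 := by
  simp only [mul_inv_rev, w0_inv, mul_assoc]

lemma LC_conj_w0 (w : Equiv.Perm (Fin n)) (j : Fin n) :
    LC (w0 * w * w0) j = LC' w (w j.rev) := by
  unfold LC' LC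
  refine card_equiv (Fin.revPerm.trans w) fun k => ?_
  simp only [mem_filter, mem_univ, true_and, conj_w0_apply, Equiv.trans_apply, Fin.revPerm_apply,
    Equiv.Perm.coe_inv, Equiv.symm_apply_apply, Fin.rev_lt_rev, and_comm]

lemma LC'_conj_w0_apply (w : Equiv.Perm (Fin n)) (j : Fin n) :
    LC' (w0 * w * w0) ((w0 * w * w0 : Equiv.Perm (Fin n)) j) = LC w j.rev := by
  rw [LC', conj_w0_inv, LC_conj_w0, conj_w0_apply, Fin.rev_rev, Equiv.Perm.coe_inv,
    Equiv.symm_apply_apply, LC', inv_inv]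

lemma GoodPair.conj_w0 {σ τ : Equiv.Perm (Fin n)} (h : GoodPair σ τ) :
    GoodPair (w0 * σ * w0) (w0 * τ * w0) := fun j => by
  rw [LC_conj_w0, LC_conj_w0, LC'_conj_w0_apply, LC'_conj_w0_apply]
  exact (h j.rev).symm

lemma Asc_conj_w0 (w : Equiv.Perm (Fin (n + 1))) :
    Asc (w0 * w * w0) = (Asc w).map Fin.revPerm.toEmbedding := by
  ext i
  simp only [mem_map_equiv, Fin.revPerm_symm, Fin.revPerm_apply, Asc, mem_filter, mem_univ,
    true_and, conj_w0_apply, Fin.rev_castSucc, Fin.rev_succ, Fin.rev_lt_rev]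

end ConjW0

theorem good_pair_disjoint_asc_conj_w0 {n : ℕ} (σ τ : Equiv.Perm (Fin (n + 1)))
    (hgp : GoodPair σ τ) (hasc : Asc σ ∩ Asc τ = ∅) :
    GoodPair (w0 * σ * w0) (w0 * τ * w0) ∧ Asc (w0 * σ * w0) ∩ Asc (w0 * τ * w0) = ∅ := by
  refine ⟨hgp.conj_w0, ?_⟩
  rw [Asc_conj_w0, Asc_conj_w0, ← map_inter, hasc, map_empty]
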